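/- Let I₀(z) = (1/(2π)) ∫₀^{2π} e^{z cos φ} dφ. For real R > r ≥ 0, the integral J₁(R,r) = ∫₀^∞ z e^{−R√(1+z²)} I₀(rz) dz equals (R/(R²−r²)) [1 + 1/√(R²−r²)] e^{−√(R²−r²)}. -/

import Mathlib

noncomputable section

/-- Modified Bessel function of the first kind of order 0:
`I₀(z) = (1/(2π)) ∫₀^{2π} e^{z cos φ} dφ`. -/
def I0 (z : ℝ) : ℝ :=
  (1 / (2 * Real.pi)) * ∫ φ in (0:ℝ)..(2 * Real.pi), Real.exp (z * Real.cos φ)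

/-!
In polar coordinates the angular integral produces `2π I₀`, so `2π J₁(R, r)` is the integral over
the plane of `exp (-R √(1 + |v|²) + r v₁)`. For fixed `v₂`, the Lorentz boost of velocity `r / R`
in the variable `v₁` turns `R √(1 + |v|²) - r v₁` into `a √(1 + |v|²)` with `a = √(R² - r²)`; its
Jacobian is `(R + r v₁ / √(1 + |v|²)) / a`, whose odd part integrates to zero. Hence
`J₁(R, r) = (R / a) J₁(a, 0)`, and `J₁(a, 0) = e^{-a} (a + 1) / a²` by an explicit antiderivative.
-/

open MeasureTheory Set Filter Real Topology

theorem integrable_exp_neg_mul_norm {E : Type*} [NormedAddCommGroup E] [NormedSpace ℝ E]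
    [Nontrivial E] [FiniteDimensional ℝ E] [MeasurableSpace E] [BorelSpace E]
    (μ : Measure E) [μ.IsAddHaarMeasure] {c : ℝ} (hc : 0 < c) :
    Integrable (fun x => exp (-c * ‖x‖)) μ := by
  rw [integrable_fun_norm_addHaar μ (f := fun y => exp (-c * y))]
  refine (integrableOn_rpow_mul_exp_neg_mul_rpow (s := (Module.finrank ℝ E - 1 : ℕ)) (p := 1)
    (neg_one_lt_zero.trans_le (Nat.cast_nonneg _)) one_pos hc).congr_fun (fun y _ => ?_)
    measurableSet_Ioi
  simp

theorem integral_eq_zero_of_odd {G : Type*} [MeasurableSpace G] [AddGroup G] [MeasurableNeg G]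
    (μ : Measure G) [μ.IsNegInvariant] {f : G → ℝ} (hf : ∀ x, f (-x) = -f x) :
    ∫ x, f x ∂μ = 0 := by
  have h := integral_neg_eq_self f μ
  simp only [hf, integral_neg] at h
  linarith

theorem sq_sub_sq_pos_of_abs_lt {R r : ℝ} (h : |r| < R) : 0 < R ^ 2 - r ^ 2 :=
  sub_pos.2 (sq_lt_sq' (neg_lt_of_abs_lt h) (lt_of_abs_lt h))

section SqrtAddSq

variable {κ : ℝ}

theorem abs_le_sqrt_add_sq (hκ : 0 ≤ κ) (u : ℝ) : |u| ≤ √(κ + u ^ 2) := by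
  rw [← sqrt_sq_eq_abs]
  exact sqrt_le_sqrt (le_add_of_nonneg_left hκ)

theorem abs_div_sqrt_add_sq_le_one (hκ : 0 ≤ κ) (u : ℝ) : |u / √(κ + u ^ 2)| ≤ 1 := by
  rw [abs_div, abs_of_nonneg (sqrt_nonneg _)]
  exact div_le_one_of_le₀ (abs_le_sqrt_add_sq hκ u) (sqrt_nonneg _)

theorem hasDerivAt_sqrt_add_sq (hκ : 0 < κ) (u : ℝ) :
    HasDerivAt (fun u => √(κ + u ^ 2)) (u / √(κ + u ^ 2)) u := by
  convert ((hasDerivAt_pow 2 u).const_add κ).sqrt (by positivity) using 1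
  push_cast
  field_simp

theorem integrable_exp_neg_mul_sqrt_add_sq {c : ℝ} (hc : 0 < c) (hκ : 0 ≤ κ) :
    Integrable (fun x : ℝ => exp (-c * √(κ + x ^ 2))) := by
  refine (integrable_exp_neg_mul_norm volume hc).mono' (by fun_prop) (.of_forall fun x => ?_)
  rw [norm_of_nonneg (exp_nonneg _), exp_le_exp, norm_eq_abs]
  nlinarith [abs_le_sqrt_add_sq hκ x]

end SqrtAddSq

theorem integrable_plane_exp_neg_mul_sqrt_add_mul {R r : ℝ} (h : |r| < R) :
    Integrable (fun v : ℝ × ℝ => exp (-R * √(1 + v.2 ^ 2 + v.1 ^ 2) + r * v.1)) := by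
  refine (integrable_exp_neg_mul_norm volume (sub_pos.2 h)).mono' (by fun_prop)
    (.of_forall fun v => ?_)
  rw [norm_of_nonneg (exp_nonneg _), exp_le_exp, Prod.norm_def, norm_eq_abs, norm_eq_abs]
  have h₁ : |v.1| ≤ √(1 + v.2 ^ 2 + v.1 ^ 2) := abs_le_sqrt_add_sq (by positivity) v.1
  have h₂ : |v.2| ≤ √(1 + v.2 ^ 2 + v.1 ^ 2) := by
    rw [add_right_comm]
    exact abs_le_sqrt_add_sq (by positivity) v.2
  have h_lin : r * v.1 ≤ |r| * √(1 + v.2 ^ 2 + v.1 ^ 2) := calc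
    r * v.1 ≤ |r| * |v.1| := abs_mul r v.1 ▸ le_abs_self _
    _ ≤ |r| * √(1 + v.2 ^ 2 + v.1 ^ 2) := by gcongr
  nlinarith [max_le h₁ h₂]

section LorentzBoost

variable {R r κ : ℝ}

/-- For `s = √(κ + u²)` and `b = lorentzBoost R r κ u`, the point `(√(κ + b²), b)` is the image of
`(s, u)` under the Lorentz boost of velocity `r / R`, so that `R √(κ + b²) - r b = √(R² - r²) s`. -/
def lorentzBoost (R r κ u : ℝ) : ℝ := (r * √(κ + u ^ 2) + R * u) / √(R ^ 2 - r ^ 2)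

theorem sqrt_add_lorentzBoost_sq (hκ : 0 ≤ κ) (h : |r| < R) (u : ℝ) :
    √(κ + lorentzBoost R r κ u ^ 2) = (R * √(κ + u ^ 2) + r * u) / √(R ^ 2 - r ^ 2) := by
  have hRr := sq_sub_sq_pos_of_abs_lt h
  have hs := sq_sqrt (add_nonneg hκ (sq_nonneg u))
  have ha := sq_sqrt hRr.le
  have h_num : 0 ≤ R * √(κ + u ^ 2) + r * u := by
    nlinarith [abs_le_sqrt_add_sq hκ u, abs_mul r u, neg_abs_le (r * u), abs_nonneg r,
      abs_nonneg u]
  rw [← sqrt_sq (div_nonneg h_num (sqrt_nonneg _)), lorentzBoost]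
  congr 1
  field_simp
  rw [ha]
  linear_combination (r ^ 2 - R ^ 2) * hs

theorem lorentzBoost_lorentzBoost_neg (hκ : 0 ≤ κ) (h : |r| < R) (x : ℝ) :
    lorentzBoost R r κ (lorentzBoost R (-r) κ x) = x := by
  have hRr := sq_sub_sq_pos_of_abs_lt h
  have ha := sq_sqrt hRr.le
  have hs := sqrt_add_lorentzBoost_sq hκ (r := -r) (by rwa [abs_neg]) x
  rw [neg_sq] at hs
  unfold lorentzBoost at hs ⊢
  rw [hs, neg_sq]
  field_simp
  linear_combination -x * ha

theorem bijective_lorentzBoost (hκ : 0 ≤ κ) (h : |r| < R) :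
    Function.Bijective (lorentzBoost R r κ) := by
  refine ⟨Function.LeftInverse.injective (g := lorentzBoost R (-r) κ) fun u => ?_,
    fun x => ⟨_, lorentzBoost_lorentzBoost_neg hκ h x⟩⟩
  simpa using lorentzBoost_lorentzBoost_neg hκ (r := -r) (by rwa [abs_neg]) u

theorem neg_mul_sqrt_add_lorentzBoost_sq_add_mul (hκ : 0 ≤ κ) (h : |r| < R) (u : ℝ) :
    -R * √(κ + lorentzBoost R r κ u ^ 2) + r * lorentzBoost R r κ u
      = -√(R ^ 2 - r ^ 2) * √(κ + u ^ 2) := by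
  have hRr := sq_sub_sq_pos_of_abs_lt h
  rw [sqrt_add_lorentzBoost_sq hκ h, lorentzBoost]
  field_simp
  linear_combination √(κ + u ^ 2) * sq_sqrt hRr.le

theorem hasDerivAt_lorentzBoost (hκ : 0 < κ) (u : ℝ) :
    HasDerivAt (lorentzBoost R r κ) ((R + r * (u / √(κ + u ^ 2))) / √(R ^ 2 - r ^ 2)) u :=
  ((((hasDerivAt_sqrt_add_sq hκ u).const_mul r).add
    ((hasDerivAt_id' u).const_mul R)).div_const _).congr_deriv (by ring)

theorem integral_exp_neg_mul_sqrt_add_sq_add_mul (hκ : 0 < κ) (h : |r| < R) :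
    ∫ x, exp (-R * √(κ + x ^ 2) + r * x)
      = R / √(R ^ 2 - r ^ 2) * ∫ x, exp (-√(R ^ 2 - r ^ 2) * √(κ + x ^ 2)) := by
  set a := √(R ^ 2 - r ^ 2)
  have ha : 0 < a := sqrt_pos.2 (sq_sub_sq_pos_of_abs_lt h)
  have h_bij := bijective_lorentzBoost hκ.le h
  have h_change := integral_image_eq_integral_abs_deriv_smul MeasurableSet.univ
    (fun u _ => (hasDerivAt_lorentzBoost hκ u).hasDerivWithinAt) h_bij.1.injOn
    (fun x => exp (-R * √(κ + x ^ 2) + r * x))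
  rw [image_univ, h_bij.2.range_eq, setIntegral_univ, setIntegral_univ] at h_change
  have h_integrand : ∀ u : ℝ,
      |(R + r * (u / √(κ + u ^ 2))) / a| •
          exp (-R * √(κ + lorentzBoost R r κ u ^ 2) + r * lorentzBoost R r κ u)
        = R / a * exp (-a * √(κ + u ^ 2))
          + r / a * (u / √(κ + u ^ 2) * exp (-a * √(κ + u ^ 2))) := by
    intro u
    have h_jac : 0 < R + r * (u / √(κ + u ^ 2)) := by
      nlinarith [neg_abs_le (r * (u / √(κ + u ^ 2))), abs_mul r (u / √(κ + u ^ 2)),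
        abs_nonneg r, abs_div_sqrt_add_sq_le_one hκ.le u]
    rw [neg_mul_sqrt_add_lorentzBoost_sq_add_mul hκ.le h, abs_of_pos (div_pos h_jac ha),
      smul_eq_mul]
    ring
  have h_odd : ∫ u, u / √(κ + u ^ 2) * exp (-a * √(κ + u ^ 2)) = 0 :=
    integral_eq_zero_of_odd volume fun u => by simp [neg_div]
  have h_int := integrable_exp_neg_mul_sqrt_add_sq ha hκ.le
  rw [h_change, integral_congr_ae (.of_forall h_integrand), integral_add, integral_const_mul,
    integral_const_mul, h_odd, mul_zero, add_zero]
  · exact h_int.const_mul _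
  · exact (h_int.bdd_mul (c := 1) (by fun_prop : Measurable _).aestronglyMeasurable
      (.of_forall (abs_div_sqrt_add_sq_le_one hκ.le))).const_mul _

end LorentzBoost

theorem MeasureTheory.Integrable.integrableOn_polarCoord_symm {E : Type*} [NormedAddCommGroup E]
    [NormedSpace ℝ E] {f : ℝ × ℝ → E} (hf : Integrable f) :
    IntegrableOn (fun p => p.1 • f (polarCoord.symm p)) polarCoord.target := by
  have h_target := polarCoord.open_target.measurableSet
  have := (integrableOn_image_iff_integrableOn_abs_det_fderiv_smul volume h_target
    (fun p _ => (hasFDerivAt_polarCoord_symm p).hasFDerivWithinAt) polarCoord.symm.injOn f).1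
    (polarCoord.symm_image_target_eq_source ▸ hf.integrableOn)
  refine this.congr_fun (fun p hp => ?_) h_target
  simp only [det_fderivPolarCoordSymm, abs_of_pos (mem_Ioi.1 hp.1)]

theorem integral_eq_integral_Ioi_integral_polarCoord_symm {f : ℝ × ℝ → ℝ} (hf : Integrable f) :
    ∫ v, f v = ∫ ρ in Ioi 0, ∫ θ in Ioo (-π) π, ρ * f (polarCoord.symm (ρ, θ)) := by
  rw [← integral_comp_polarCoord_symm]
  have := hf.integrableOn_polarCoord_symm
  rw [polarCoord_target, Measure.volume_eq_prod] at this ⊢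
  exact setIntegral_prod _ this

theorem I0_zero : I0 0 = 1 := by
  simp only [I0, zero_mul, exp_zero, intervalIntegral.integral_const, sub_zero, smul_eq_mul]
  field_simp

theorem setIntegral_Ioo_exp_mul_cos (z : ℝ) :
    ∫ φ in Ioo (-π) π, exp (z * cos φ) = 2 * π * I0 z := by
  have h_per : Function.Periodic (fun φ => exp (z * cos φ)) (2 * π) := fun φ => by
    simp [cos_add_two_pi]
  have h := h_per.intervalIntegral_add_eq 0 (-π)
  rw [zero_add, show -π + 2 * π = π by ring] at h
  rw [I0, h, intervalIntegral.integral_of_le (by linarith [pi_pos]), integral_Ioc_eq_integral_Ioo]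
  field_simp

theorem integral_plane_exp_add_mul_eq_two_pi_mul_integral_I0 {R r : ℝ} (h : |r| < R) :
    ∫ v : ℝ × ℝ, exp (-R * √(1 + v.2 ^ 2 + v.1 ^ 2) + r * v.1)
      = 2 * π * ∫ z in Ioi 0, z * exp (-R * √(1 + z ^ 2)) * I0 (r * z) := by
  rw [integral_eq_integral_Ioi_integral_polarCoord_symm
    (integrable_plane_exp_neg_mul_sqrt_add_mul h), ← integral_const_mul]
  refine integral_congr_ae (.of_forall fun ρ => ?_)
  have h_polar : ∀ θ, ρ * exp (-R * √(1 + (ρ * sin θ) ^ 2 + (ρ * cos θ) ^ 2) + r * (ρ * cos θ))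
      = ρ * exp (-R * √(1 + ρ ^ 2)) * exp (r * ρ * cos θ) := fun θ => by
    rw [show 1 + (ρ * sin θ) ^ 2 + (ρ * cos θ) ^ 2 = 1 + ρ ^ 2 by
      linear_combination ρ ^ 2 * sin_sq_add_cos_sq θ, mul_assoc, ← exp_add]
    ring_nf
  simp only [polarCoord_symm_apply, h_polar]
  rw [integral_const_mul, setIntegral_Ioo_exp_mul_cos]
  ring

theorem tendsto_exp_neg_mul_mul_add_atTop {c : ℝ} (hc : 0 < c) :
    Tendsto (fun t => exp (-c * t) * (t / c + 1 / c ^ 2)) atTop (𝓝 0) := by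
  have h := ((tendsto_rpow_mul_exp_neg_mul_atTop_nhds_zero 1 c hc).div_const c).add
    ((tendsto_rpow_mul_exp_neg_mul_atTop_nhds_zero 0 c hc).div_const (c ^ 2))
  simp only [zero_div, add_zero, rpow_one, rpow_zero, one_mul] at h
  exact h.congr fun t => by ring

theorem integral_Ioi_mul_exp_neg_mul_sqrt_one_add_sq {c : ℝ} (hc : 0 < c) :
    ∫ z in Ioi 0, z * exp (-c * √(1 + z ^ 2)) = exp (-c) * (c + 1) / c ^ 2 := by
  let G : ℝ → ℝ := fun z => -(exp (-c * √(1 + z ^ 2)) * (√(1 + z ^ 2) / c + 1 / c ^ 2))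
  have hG : ∀ z, HasDerivAt G (z * exp (-c * √(1 + z ^ 2))) z := fun z => by
    have hs := hasDerivAt_sqrt_add_sq one_pos z
    refine ((hs.const_mul (-c)).exp.mul ((hs.div_const c).add_const _)).neg.congr_deriv ?_
    field_simp
    ring
  have h_sqrt : Tendsto (fun z : ℝ => √(1 + z ^ 2)) atTop atTop :=
    tendsto_atTop_mono (fun z => (le_abs_self z).trans (abs_le_sqrt_add_sq zero_le_one z))
      tendsto_id
  have h_lim : Tendsto G atTop (𝓝 0) := by
    rw [← neg_zero]
    exact ((tendsto_exp_neg_mul_mul_add_atTop hc).comp h_sqrt).neg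
  rw [integral_Ioi_of_hasDerivAt_of_nonneg (hG 0).continuousAt.continuousWithinAt
    (fun z _ => hG z) (fun z hz => mul_nonneg (le_of_lt hz) (exp_nonneg _)) h_lim]
  simp only [G]
  norm_num
  field_simp

theorem integral_plane_exp_neg_mul_sqrt {c : ℝ} (hc : 0 < c) :
    ∫ v : ℝ × ℝ, exp (-c * √(1 + v.2 ^ 2 + v.1 ^ 2))
      = 2 * π * (exp (-c) * (c + 1) / c ^ 2) := by
  have h := integral_plane_exp_add_mul_eq_two_pi_mul_integral_I0 (r := 0) (by rwa [abs_zero])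
  simp only [zero_mul, add_zero, I0_zero, mul_one] at h
  rw [h, integral_Ioi_mul_exp_neg_mul_sqrt_one_add_sq hc]

theorem integral_plane_exp_add_mul_eq_div_mul_integral_plane_exp {R r : ℝ} (h : |r| < R) :
    ∫ v : ℝ × ℝ, exp (-R * √(1 + v.2 ^ 2 + v.1 ^ 2) + r * v.1)
      = R / √(R ^ 2 - r ^ 2)
          * ∫ v : ℝ × ℝ, exp (-√(R ^ 2 - r ^ 2) * √(1 + v.2 ^ 2 + v.1 ^ 2)) := by
  have h_int := integrable_plane_exp_neg_mul_sqrt_add_mul (r := 0)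
    (by rw [abs_zero]; exact sqrt_pos.2 (sq_sub_sq_pos_of_abs_lt h))
  simp only [zero_mul, add_zero] at h_int
  rw [Measure.volume_eq_prod, integral_prod_symm _ (integrable_plane_exp_neg_mul_sqrt_add_mul h),
    integral_prod_symm _ h_int, ← integral_const_mul]
  exact integral_congr_ae (.of_forall fun y =>
    integral_exp_neg_mul_sqrt_add_sq_add_mul (κ := 1 + y ^ 2) (by positivity) h)

theorem J1_eval (R r : ℝ) (hr : 0 ≤ r) (hR : r < R) :
    (∫ z in Set.Ioi (0:ℝ), z * Real.exp (-R * Real.sqrt (1 + z ^ 2)) * I0 (r * z))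
      = (R / (R ^ 2 - r ^ 2)) * (1 + 1 / Real.sqrt (R ^ 2 - r ^ 2))
          * Real.exp (-Real.sqrt (R ^ 2 - r ^ 2)) := by
  have h : |r| < R := abs_lt.2 ⟨by linarith, hR⟩
  have hRr := sq_sub_sq_pos_of_abs_lt h
  have ha := sqrt_pos.2 hRr
  have h_plane := integral_plane_exp_add_mul_eq_two_pi_mul_integral_I0 h
  rw [integral_plane_exp_add_mul_eq_div_mul_integral_plane_exp h,
    integral_plane_exp_neg_mul_sqrt ha] at h_plane
  have ha2 := sq_sqrt hRr.le
  set a := √(R ^ 2 - r ^ 2)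
  rw [← ha2, ← mul_right_inj' two_pi_pos.ne', ← h_plane]
  field_simp
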